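/- arXiv:0710.3258 — 3 statements merged into one kernel-verified Lean document; each statement's English description precedes it below -/
import Mathlib

section
/- Define S : ℕ → ℕ by S(0)=S(1)=S(2)=0 and for n ≥ 3, S(n) = max over 1 ≤ a ≤ n of [C(a,3) + 2·C(a,2)·(n−a) + a·C(n−a,2) + S(n−a)], where C denotes the binomial coefficient. Then S is well-defined (the recursion terminates) and S(n) ≤ 3·C(n,3) for all n. -/
/-!
Split `n = a + m`. By Vandermonde,
`3·C(n,3) = 3·C(a,3) + 3·C(a,2)·m + 3·a·C(m,2) + 3·C(m,3)`,
which dominates each candidate `C(a,3) + 2·C(a,2)·m + a·C(m,2) + S(m)` term by term once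
`S(m) ≤ 3·C(m,3)` is known by strong induction.
-/

/-- The galled-caterpillar recursion: `S 0 = S 1 = S 2 = 0` and for `n ≥ 3`,
`S n = max_{1 ≤ a ≤ n} [C(a,3) + 2·C(a,2)·(n−a) + a·C(n−a,2) + S(n−a)]`.
That this definition elaborates witnesses that the recursion is well-founded. -/
def S : ℕ → ℕ
  | 0 => 0
  | 1 => 0
  | 2 => 0
  | (n + 3) =>
      ((Finset.Icc 1 (n + 3)).attach.sup fun a =>
        Nat.choose a.1 3 + 2 * Nat.choose a.1 2 * (n + 3 - a.1) +
          a.1 * Nat.choose (n + 3 - a.1) 2 + S (n + 3 - a.1))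
  termination_by n => n
  decreasing_by
    have := a.2
    simp only [Finset.mem_Icc] at this
    omega

theorem Nat.add_choose_three (a m : ℕ) :
    (a + m).choose 3 = a.choose 3 + a.choose 2 * m + a * m.choose 2 + m.choose 3 := by
  rw [Nat.add_choose_eq, Finset.Nat.sum_antidiagonal_eq_sum_range_succ_mk]
  simp only [Finset.sum_range_succ, Finset.sum_range_zero]
  norm_num
  ring

theorem caterpillar_candidate_le (a m : ℕ) :
    a.choose 3 + 2 * a.choose 2 * m + a * m.choose 2 + 3 * m.choose 3 ≤ 3 * (a + m).choose 3 := by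
  rw [Nat.add_choose_three]
  linarith [Nat.zero_le (a.choose 3), Nat.zero_le (a.choose 2 * m), Nat.zero_le (a * m.choose 2)]

theorem S_le_three_choose (n : ℕ) : S n ≤ 3 * Nat.choose n 3 := by
  induction n using Nat.strong_induction_on with
  | _ n ih =>
    match n with
    | 0 | 1 | 2 => simp [S]
    | k + 3 =>
      rw [S]
      refine Finset.sup_le fun ⟨a, ha⟩ _ => ?_
      obtain ⟨ha1, han⟩ := Finset.mem_Icc.mp ha
      calc _ ≤ a.choose 3 + 2 * a.choose 2 * (k + 3 - a) + a * (k + 3 - a).choose 2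
              + 3 * (k + 3 - a).choose 3 := Nat.add_le_add_left (ih _ (by omega)) _
        _ ≤ 3 * (a + (k + 3 - a)).choose 3 := caterpillar_candidate_le a _
        _ = 3 * (k + 3).choose 3 := by rw [Nat.add_sub_cancel' han]
end

section
/- With S defined by S(0)=S(1)=S(2)=0 and S(n) = max_{1 ≤ a ≤ n} [C(a,3) + 2·C(a,2)·(n−a) + a·C(n−a,2) + S(n−a)] for n ≥ 3, we have S(n) > 0.48 · 3 · C(n,3) for all n ≥ 3. -/

lemma S_ge (n a : ℕ) (ha : a ∈ Finset.Icc 1 (n + 3)) :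
    Nat.choose a 3 + 2 * Nat.choose a 2 * (n + 3 - a) +
      a * Nat.choose (n + 3 - a) 2 + S (n + 3 - a) ≤ S (n + 3) := by
  rw [S.eq_4]
  exact Finset.le_sup (f := fun a : {x // x ∈ Finset.Icc 1 (n + 3)} =>
    Nat.choose a.1 3 + 2 * Nat.choose a.1 2 * (n + 3 - a.1) +
      a.1 * Nat.choose (n + 3 - a.1) 2 + S (n + 3 - a.1))
    (Finset.mem_attach _ ⟨a, ha⟩)

lemma c2 (x : ℕ) : 2 * Nat.choose x 2 = x * (x - 1) := by
  induction x with
  | zero => simp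
  | succ n ih =>
    rw [Nat.choose_succ_succ]
    rcases n with _ | m
    · simp
    · simp only [Nat.choose_one_right] at *
      push_cast [Nat.succ_sub_one] at *
      nlinarith [ih]

lemma c3 (x : ℕ) : 6 * Nat.choose x 3 = x * (x - 1) * (x - 2) := by
  induction x with
  | zero => simp
  | succ n ih =>
    rw [Nat.choose_succ_succ]
    rcases n with _ | _ | m
    · simp
    · simp [Nat.choose]
    · have h2 := c2 (m + 2)
      simp only [Nat.succ_sub_one] at *
      push_cast at *
      nlinarith [ih, h2]

set_option maxHeartbeats 1000000 in
lemma key : ∀ n : ℕ, 3 ≤ n → 144 * Nat.choose n 3 < 100 * S n := by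
  intro n
  induction n using Nat.strong_induction_on with
  | _ n ih =>
    intro hn
    by_cases h7 : n < 7
    · interval_cases n
      · have h := S_ge 0 2 (by decide)
        norm_num [S.eq_2, S.eq_3, Nat.choose] at h ⊢
        omega
      · have h := S_ge 1 2 (by decide)
        norm_num [S.eq_2, S.eq_3, Nat.choose] at h ⊢
        omega
      · have h := S_ge 2 3 (by decide)
        norm_num [S.eq_2, S.eq_3, Nat.choose] at h ⊢
        omega
      · have h := S_ge 3 4 (by decide)
        norm_num [S.eq_2, S.eq_3, Nat.choose] at h ⊢
        omega
    · push_neg at h7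
      obtain ⟨t, ht⟩ : ∃ t, n = 3*t+9 ∨ n = 3*t+7 ∨ n = 3*t+8 := ⟨(n-7)/3, by omega⟩
      rcases ht with ht | ht | ht
      all_goals subst ht
      · -- n = 3t+9, a = 2t+6, b = t+3
        have h := S_ge (3*t+6) (2*t+6) (by simp [Finset.mem_Icc]; omega)
        have hb : 3*t+6+3 - (2*t+6) = t+3 := by omega
        rw [hb] at h
        have ihb := ih (t+3) (by omega) (by omega)
        have e1 := c3 (3*t+9); have e2 := c3 (2*t+6); have e3 := c2 (2*t+6)
        have e4 := c2 (t+3); have e5 := c3 (t+3)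
        rw [show 3*t+9-1 = 3*t+8 from by omega, show 3*t+9-2 = 3*t+7 from by omega] at e1
        rw [show 2*t+6-1 = 2*t+5 from by omega, show 2*t+6-2 = 2*t+4 from by omega] at e2
        rw [show 2*t+6-1 = 2*t+5 from by omega] at e3
        rw [show t+3-1 = t+2 from by omega] at e4
        rw [show t+3-1 = t+2 from by omega, show t+3-2 = t+1 from by omega] at e5
        have hg : 3*t+6+3 = 3*t+9 := by omega
        rw [hg] at h
        have p1 : 2 * Nat.choose (2*t+6) 2 * (t+3) = (2*t+6) * (2*t+5) * (t+3) := by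
          rw [e3]
        have p2 : (2*t+6) * (2 * Nat.choose (t+3) 2) = (2*t+6) * ((t+3) * (t+2)) := by
          rw [e4]
        have hpoly : 144 * ((3*t+9) * (3*t+8) * (3*t+7)) ≤
            100 * ((2*t+6) * (2*t+5) * (2*t+4)) + 600 * ((2*t+6) * (2*t+5) * (t+3)) +
            300 * ((2*t+6) * ((t+3) * (t+2))) + 144 * ((t+3) * (t+2) * (t+1)) := by
          nlinarith [sq_nonneg t, t.zero_le]
        have big : 864 * Nat.choose (3*t+9) 3 ≤ 600 * Nat.choose (2*t+6) 3 +
            600 * (2 * Nat.choose (2*t+6) 2 * (t+3)) +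
            300 * ((2*t+6) * (2 * Nat.choose (t+3) 2)) + 864 * Nat.choose (t+3) 3 := by
          linarith [e1, e2, e5, p1, p2, hpoly]
        linarith [h, ihb, big]
      · -- n = 3t+7, a = 2t+4, b = t+3
        have h := S_ge (3*t+4) (2*t+4) (by simp [Finset.mem_Icc]; omega)
        have hb : 3*t+4+3 - (2*t+4) = t+3 := by omega
        rw [hb] at h
        have ihb := ih (t+3) (by omega) (by omega)
        have e1 := c3 (3*t+7); have e2 := c3 (2*t+4); have e3 := c2 (2*t+4)
        have e4 := c2 (t+3); have e5 := c3 (t+3)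
        rw [show 3*t+7-1 = 3*t+6 from by omega, show 3*t+7-2 = 3*t+5 from by omega] at e1
        rw [show 2*t+4-1 = 2*t+3 from by omega, show 2*t+4-2 = 2*t+2 from by omega] at e2
        rw [show 2*t+4-1 = 2*t+3 from by omega] at e3
        rw [show t+3-1 = t+2 from by omega] at e4
        rw [show t+3-1 = t+2 from by omega, show t+3-2 = t+1 from by omega] at e5
        have hg : 3*t+4+3 = 3*t+7 := by omega
        rw [hg] at h
        have p1 : 2 * Nat.choose (2*t+4) 2 * (t+3) = (2*t+4) * (2*t+3) * (t+3) := by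
          rw [e3]
        have p2 : (2*t+4) * (2 * Nat.choose (t+3) 2) = (2*t+4) * ((t+3) * (t+2)) := by
          rw [e4]
        have hpoly : 144 * ((3*t+7) * (3*t+6) * (3*t+5)) ≤
            100 * ((2*t+4) * (2*t+3) * (2*t+2)) + 600 * ((2*t+4) * (2*t+3) * (t+3)) +
            300 * ((2*t+4) * ((t+3) * (t+2))) + 144 * ((t+3) * (t+2) * (t+1)) := by
          nlinarith [sq_nonneg t, t.zero_le]
        have big : 864 * Nat.choose (3*t+7) 3 ≤ 600 * Nat.choose (2*t+4) 3 +
            600 * (2 * Nat.choose (2*t+4) 2 * (t+3)) +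
            300 * ((2*t+4) * (2 * Nat.choose (t+3) 2)) + 864 * Nat.choose (t+3) 3 := by
          linarith [e1, e2, e5, p1, p2, hpoly]
        linarith [h, ihb, big]
      · -- n = 3t+8, a = 2t+5, b = t+3
        have h := S_ge (3*t+5) (2*t+5) (by simp [Finset.mem_Icc]; omega)
        have hb : 3*t+5+3 - (2*t+5) = t+3 := by omega
        rw [hb] at h
        have ihb := ih (t+3) (by omega) (by omega)
        have e1 := c3 (3*t+8); have e2 := c3 (2*t+5); have e3 := c2 (2*t+5)
        have e4 := c2 (t+3); have e5 := c3 (t+3)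
        rw [show 3*t+8-1 = 3*t+7 from by omega, show 3*t+8-2 = 3*t+6 from by omega] at e1
        rw [show 2*t+5-1 = 2*t+4 from by omega, show 2*t+5-2 = 2*t+3 from by omega] at e2
        rw [show 2*t+5-1 = 2*t+4 from by omega] at e3
        rw [show t+3-1 = t+2 from by omega] at e4
        rw [show t+3-1 = t+2 from by omega, show t+3-2 = t+1 from by omega] at e5
        have hg : 3*t+5+3 = 3*t+8 := by omega
        rw [hg] at h
        have p1 : 2 * Nat.choose (2*t+5) 2 * (t+3) = (2*t+5) * (2*t+4) * (t+3) := by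
          rw [e3]
        have p2 : (2*t+5) * (2 * Nat.choose (t+3) 2) = (2*t+5) * ((t+3) * (t+2)) := by
          rw [e4]
        have hpoly : 144 * ((3*t+8) * (3*t+7) * (3*t+6)) ≤
            100 * ((2*t+5) * (2*t+4) * (2*t+3)) + 600 * ((2*t+5) * (2*t+4) * (t+3)) +
            300 * ((2*t+5) * ((t+3) * (t+2))) + 144 * ((t+3) * (t+2) * (t+1)) := by
          nlinarith [sq_nonneg t, t.zero_le]
        have big : 864 * Nat.choose (3*t+8) 3 ≤ 600 * Nat.choose (2*t+5) 3 +
            600 * (2 * Nat.choose (2*t+5) 2 * (t+3)) +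
            300 * ((2*t+5) * (2 * Nat.choose (t+3) 2)) + 864 * Nat.choose (t+3) 3 := by
          linarith [e1, e2, e5, p1, p2, hpoly]
        linarith [h, ihb, big]

/-- For every n ≥ 3, S(n) exceeds the fraction 0.48 of the total number
3·C(n,3) of rooted triplets on n species. -/
theorem S_gt_048 (n : ℕ) (hn : 3 ≤ n) :
    (48 : ℚ) / 100 * (3 * Nat.choose n 3) < S n := by
  have h := key n hn
  have : (144 * Nat.choose n 3 : ℚ) < 100 * S n := by exact_mod_cast h
  linarith
end

section
/- Let n ≥ 116 and z = ⌊2n/3⌋. If S(n−z) ≥ (144/100)·C(n−z,3), then C(z,3) + 2·C(z,2)·(n−z) + z·C(n−z,2) + (144/100)·C(n−z,3) > (48/100)·3·C(n,3). -/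
lemma c2_s2 (a : ℕ) : 2 * a.choose 2 = a * (a - 1) := by
  induction a with
  | zero => rfl
  | succ b ih =>
    rw [Nat.choose_succ_succ, Nat.mul_add, ih, Nat.choose_one_right]
    rcases b with _ | c
    · rfl
    · simp only [Nat.succ_sub_one]
      ring

lemma c3_s2 (a : ℕ) : 6 * a.choose 3 = a * (a - 1) * (a - 2) := by
  induction a with
  | zero => rfl
  | succ b ih =>
    rw [Nat.choose_succ_succ, Nat.mul_add, ih]
    have h2 : 6 * Nat.choose b 2 = 3 * (b * (b - 1)) := by
      have := c2_s2 b; omega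
    rcases b with _ | _ | c
    · rfl
    · rfl
    · have ea : c + 1 + 1 - 2 = c := by omega
      have eb : c + 1 + 1 + 1 - 2 = c + 1 := by omega
      simp only [Nat.succ_sub_one, ea, eb] at *
      rw [h2]
      ring

lemma cast_c2 (a : ℕ) (ha : 1 ≤ a) : (Nat.choose a 2 : ℚ) = (a : ℚ) * ((a : ℚ) - 1) / 2 := by
  have h : ((2 * a.choose 2 : ℕ) : ℚ) = ((a * (a - 1) : ℕ) : ℚ) := by exact_mod_cast c2_s2 a
  push_cast [Nat.cast_sub ha] at h
  linarith

lemma cast_c3 (a : ℕ) (ha : 2 ≤ a) : (Nat.choose a 3 : ℚ) = (a : ℚ) * ((a : ℚ) - 1) * ((a : ℚ) - 2) / 6 := by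
  have h : ((6 * a.choose 3 : ℕ) : ℚ) = ((a * (a - 1) * (a - 2) : ℕ) : ℚ) := by exact_mod_cast c3_s2 a
  push_cast [Nat.cast_sub (by omega : 1 ≤ a), Nat.cast_sub ha] at h
  linarith


/-- The key inductive-step inequality: for n ≥ 116 and z = ⌊2n/3⌋, if
S(n−z) ≥ 1.44·C(n−z,3) then the value of the recursion summand at a = z
exceeds 0.48·3·C(n,3). -/
theorem inductive_step (n : ℕ) (hn : 116 ≤ n) (z : ℕ) (hz : z = 2 * n / 3)
    (hS : (144 : ℚ) / 100 * Nat.choose (n - z) 3 ≤ (S (n - z) : ℚ)) :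
    (48 : ℚ) / 100 * (3 * Nat.choose n 3) <
      (Nat.choose z 3 : ℚ) + 2 * Nat.choose z 2 * (n - z : ℕ) +
        z * Nat.choose (n - z) 2 + (144 : ℚ) / 100 * Nat.choose (n - z) 3 := by
  have hzle : z ≤ n := by omega
  rw [cast_c3 n (by omega), cast_c3 z (by omega), cast_c3 (n - z) (by omega),
      cast_c2 z (by omega), cast_c2 (n - z) (by omega)]
  have hcast : ((n - z : ℕ) : ℚ) = (n : ℚ) - (z : ℚ) := by
    push_cast [Nat.cast_sub hzle]; ring
  rw [hcast]
  have h1 : (3 * z : ℚ) ≤ 2 * n := by exact_mod_cast (by omega : 3 * z ≤ 2 * n)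
  have h2 : (2 * n : ℚ) ≤ 3 * z + 2 := by exact_mod_cast (by omega : 2 * n ≤ 3 * z + 2)
  have h3 : (116 : ℚ) ≤ (n : ℚ) := by exact_mod_cast hn
  nlinarith [mul_nonneg (sub_nonneg.2 h1) (sub_nonneg.2 h1),
    mul_nonneg (sub_nonneg.2 h2) (sub_nonneg.2 h2),
    mul_nonneg (sub_nonneg.2 h1) (sub_nonneg.2 h3),
    mul_nonneg (sub_nonneg.2 h2) (sub_nonneg.2 h3),
    mul_nonneg (mul_nonneg (sub_nonneg.2 h3) (sub_nonneg.2 h3)) (sub_nonneg.2 h3),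
    mul_nonneg (mul_nonneg (sub_nonneg.2 h1) (sub_nonneg.2 h3)) (sub_nonneg.2 h3),
    mul_nonneg (mul_nonneg (sub_nonneg.2 h2) (sub_nonneg.2 h3)) (sub_nonneg.2 h3),
    sq_nonneg ((n:ℚ) - z)]
end
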